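/- arXiv:1609.06369 — 3 statements merged into one kernel-verified Lean document; each statement's English description precedes it below -/
import Mathlib

section
/- Let f : ℝⁿ → ℝ be convex, differentiable with β-Lipschitz gradient, and suppose x* minimizes f with f* = f(x*). Then the gradient descent iterates x^{k+1} = x^k - (1/β)∇f(x^k) started at x¹ satisfy f(x^k) - f* ≤ β‖x¹ - x*‖²/(2k) for all k ≥ 1. -/
open RealInnerProductSpace Set

section Aux

variable {n : ℕ}

/-- The derivative of `f` along a line. -/
lemma gd_line_hasDerivAt {f : EuclideanSpace ℝ (Fin n) → ℝ}
    {f' : EuclideanSpace ℝ (Fin n) → EuclideanSpace ℝ (Fin n)}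
    (hdiff : ∀ z, HasGradientAt f (f' z) z) (x d : EuclideanSpace ℝ (Fin n)) (t : ℝ) :
    HasDerivAt (fun s : ℝ => f (x + s • d)) ⟪f' (x + t • d), d⟫ t := by
  have hc : HasDerivAt (fun s : ℝ => x + s • d) d t := by
    simpa using ((hasDerivAt_id t).smul_const d).const_add x
  have hf := (hdiff (x + t • d)).hasFDerivAt
  have := hf.comp_hasDerivAt t hc
  simpa [InnerProductSpace.toDual_apply_apply, Function.comp_def] using this

/-- Descent lemma: quadratic upper bound from a β-Lipschitz gradient. -/
lemma gd_descent {f : EuclideanSpace ℝ (Fin n) → ℝ}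
    {f' : EuclideanSpace ℝ (Fin n) → EuclideanSpace ℝ (Fin n)} {β : ℝ} (hβ : 0 < β)
    (hdiff : ∀ z, HasGradientAt f (f' z) z)
    (hlip : ∀ x y, ‖f' x - f' y‖ ≤ β * ‖x - y‖) (x y : EuclideanSpace ℝ (Fin n)) :
    f y ≤ f x + ⟪f' x, y - x⟫ + β / 2 * ‖y - x‖ ^ 2 := by
  set d := y - x with hd
  set h : ℝ → ℝ := fun t => f (x + t • d) - t * ⟪f' x, d⟫ - β / 2 * t ^ 2 * ‖d‖ ^ 2 with hh
  have hder : ∀ t : ℝ, HasDerivAt h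
      (⟪f' (x + t • d), d⟫ - ⟪f' x, d⟫ - β * t * ‖d‖ ^ 2) t := by
    intro t
    have h1 := gd_line_hasDerivAt hdiff x d t
    have h2 : HasDerivAt (fun s : ℝ => s * ⟪f' x, d⟫) ⟪f' x, d⟫ t := by
      simpa using (hasDerivAt_id t).mul_const ⟪f' x, d⟫
    have h3 : HasDerivAt (fun s : ℝ => β / 2 * s ^ 2 * ‖d‖ ^ 2) (β * t * ‖d‖ ^ 2) t := by
      have := ((hasDerivAt_pow 2 t).const_mul (β / 2)).mul_const (‖d‖ ^ 2)
      exact this.congr_deriv (by ring)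
    exact (h1.sub h2).sub h3
  have hanti : AntitoneOn h (Icc (0:ℝ) 1) := by
    apply antitoneOn_of_deriv_nonpos (convex_Icc 0 1)
    · exact fun t _ => ((hder t).continuousAt).continuousWithinAt
    · exact fun t _ => ((hder t).differentiableAt).differentiableWithinAt
    · intro t ht
      rw [interior_Icc] at ht
      rw [(hder t).deriv]
      have hlin : ⟪f' (x + t • d) - f' x, d⟫ ≤ β * t * ‖d‖ ^ 2 := by
        calc ⟪f' (x + t • d) - f' x, d⟫ ≤ ‖f' (x + t • d) - f' x‖ * ‖d‖ :=
              real_inner_le_norm _ _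
          _ ≤ (β * ‖(x + t • d) - x‖) * ‖d‖ :=
              mul_le_mul_of_nonneg_right (hlip _ _) (norm_nonneg d)
          _ = β * t * ‖d‖ ^ 2 := by
              rw [add_sub_cancel_left, norm_smul, Real.norm_eq_abs, abs_of_pos ht.1]
              ring
      rw [inner_sub_left] at hlin
      linarith
  have hle := hanti (left_mem_Icc.2 zero_le_one) (right_mem_Icc.2 zero_le_one) zero_le_one
  have e0 : h 0 = f x := by simp [hh]
  have hxy : x + d = y := by rw [hd]; abel
  have e1 : h 1 = f y - ⟪f' x, d⟫ - β / 2 * ‖d‖ ^ 2 := by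
    simp [hh, hxy]
  rw [e0, e1] at hle
  linarith

/-- Gradient inequality for convex functions. -/
lemma gd_convex_ineq {f : EuclideanSpace ℝ (Fin n) → ℝ}
    {f' : EuclideanSpace ℝ (Fin n) → EuclideanSpace ℝ (Fin n)}
    (hconv : ConvexOn ℝ Set.univ f)
    (hdiff : ∀ z, HasGradientAt f (f' z) z) (x y : EuclideanSpace ℝ (Fin n)) :
    f x + ⟪f' x, y - x⟫ ≤ f y := by
  set d := y - x with hd
  set g : ℝ → ℝ := fun t => f (x + t • d) with hg
  have gconv : ConvexOn ℝ univ g := by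
    have h := hconv.comp_affineMap (AffineMap.lineMap x y : ℝ →ᵃ[ℝ] EuclideanSpace ℝ (Fin n))
    rw [Set.preimage_univ] at h
    suffices hgeq : g = f ∘ ⇑(AffineMap.lineMap x y : ℝ →ᵃ[ℝ] EuclideanSpace ℝ (Fin n)) by rw [hgeq]; exact h
    funext t
    simp only [Function.comp_apply, AffineMap.lineMap_apply, hg]
    rw [vsub_eq_sub, vadd_eq_add, add_comm]
  have hg0 : HasDerivAt g ⟪f' x, d⟫ 0 := by
    have := gd_line_hasDerivAt hdiff x d 0
    simpa using this
  have hs := gconv.le_slope_of_hasDerivAt (mem_univ (0:ℝ)) (mem_univ (1:ℝ)) zero_lt_one hg0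
  rw [slope_def_field] at hs
  have e0 : g 0 = f x := by simp [hg]
  have hxy : x + d = y := by rw [hd]; abel
  have e1 : g 1 = f y := by simp [hg, hxy]
  rw [e0, e1, show (1:ℝ) - 0 = 1 by norm_num, div_one] at hs
  linarith

/-- Co-coercivity-type lower bound for smooth convex functions. -/
lemma gd_cocoercive {f : EuclideanSpace ℝ (Fin n) → ℝ}
    {f' : EuclideanSpace ℝ (Fin n) → EuclideanSpace ℝ (Fin n)} {β : ℝ} (hβ : 0 < β)
    (hconv : ConvexOn ℝ Set.univ f)
    (hdiff : ∀ z, HasGradientAt f (f' z) z)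
    (hlip : ∀ x y, ‖f' x - f' y‖ ≤ β * ‖x - y‖) (x y : EuclideanSpace ℝ (Fin n)) :
    f x + ⟪f' x, y - x⟫ + 1 / (2 * β) * ‖f' y - f' x‖ ^ 2 ≤ f y := by
  set g := f' y - f' x with hgdef
  set w := y - (1 / β) • g with hwdef
  have h1 := gd_convex_ineq hconv hdiff x w
  have h2 := gd_descent hβ hdiff hlip y w
  have hwy : w - y = -((1 / β) • g) := by rw [hwdef]; abel
  have hsplit : ⟪f' x, w - x⟫ = ⟪f' x, w - y⟫ + ⟪f' x, y - x⟫ := by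
    rw [← inner_add_right]
    congr 1
    abel
  have hiy : ⟪f' y, w - y⟫ = -(1 / β) * ⟪f' y, g⟫ := by
    rw [hwy, inner_neg_right, real_inner_smul_right]; ring
  have hix : ⟪f' x, w - y⟫ = -(1 / β) * ⟪f' x, g⟫ := by
    rw [hwy, inner_neg_right, real_inner_smul_right]; ring
  have hgg : ⟪f' y, g⟫ - ⟪f' x, g⟫ = ‖g‖ ^ 2 := by
    rw [← inner_sub_left, ← hgdef, real_inner_self_eq_norm_sq]
  have hnw : ‖w - y‖ ^ 2 = (1 / β) ^ 2 * ‖g‖ ^ 2 := by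
    rw [hwy, norm_neg, norm_smul, Real.norm_eq_abs, abs_of_pos (by positivity : (0:ℝ) < 1 / β)]
    ring
  have hβ' : β ≠ 0 := ne_of_gt hβ
  rw [hsplit, hix] at h1
  rw [hiy, hnw] at h2
  have key : -(1 / β) * ⟪f' y, g⟫ + β / 2 * ((1 / β) ^ 2 * ‖g‖ ^ 2)
      - (-(1 / β) * ⟪f' x, g⟫) = -(1 / (2 * β)) * ‖g‖ ^ 2 := by
    have : ⟪f' y, g⟫ = ⟪f' x, g⟫ + ‖g‖ ^ 2 := by linarith
    rw [this]
    field_simp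
    ring
  linarith

/-- Algebraic expansion used for the telescoping estimate. -/
lemma gd_expand {β : ℝ} (hβ : 0 < β) (a g : EuclideanSpace ℝ (Fin n)) :
    β / 2 * ‖a‖ ^ 2 - β / 2 * ‖a - (1 / β) • g‖ ^ 2
      = ⟪g, a⟫ - 1 / (2 * β) * ‖g‖ ^ 2 := by
  rw [norm_sub_sq_real, real_inner_smul_right, norm_smul, Real.norm_eq_abs,
    abs_of_pos (by positivity : (0:ℝ) < 1 / β), real_inner_comm a g]
  field_simp
  ring

end Aux

theorem gradient_descent_rate {n : ℕ}
    (f : EuclideanSpace ℝ (Fin n) → ℝ)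
    (f' : EuclideanSpace ℝ (Fin n) → EuclideanSpace ℝ (Fin n))
    (β : ℝ) (hβ : 0 < β)
    (hconv : ConvexOn ℝ Set.univ f)
    (hdiff : ∀ x, HasGradientAt f (f' x) x)
    (hlip : ∀ x y, ‖f' x - f' y‖ ≤ β * ‖x - y‖)
    (xstar : EuclideanSpace ℝ (Fin n)) (hmin : ∀ y, f xstar ≤ f y)
    (x : ℕ → EuclideanSpace ℝ (Fin n))
    (hiter : ∀ k, x (k + 1) = x k - (1 / β) • f' (x k)) :
    ∀ k : ℕ, 1 ≤ k → f (x k) - f xstar ≤ β * ‖x 1 - xstar‖ ^ 2 / (2 * k) := by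
  have hβ' : β ≠ 0 := ne_of_gt hβ
  -- the gradient vanishes at the minimizer
  have hstar : f' xstar = 0 := by
    have hdes := gd_descent hβ hdiff hlip xstar (xstar - (1 / β) • f' xstar)
    have hm := hmin (xstar - (1 / β) • f' xstar)
    have hsub : xstar - (1 / β) • f' xstar - xstar = -((1 / β) • f' xstar) := by abel
    rw [hsub, inner_neg_right, real_inner_smul_right, real_inner_self_eq_norm_sq,
      norm_neg, norm_smul, Real.norm_eq_abs, abs_of_pos (by positivity : (0:ℝ) < 1 / β)] at hdes
    have h0 : -(1 / β * ‖f' xstar‖ ^ 2) + β / 2 * (1 / β * ‖f' xstar‖) ^ 2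
        = -(1 / (2 * β)) * ‖f' xstar‖ ^ 2 := by field_simp; ring
    have h1 : 1 / (2 * β) * ‖f' xstar‖ ^ 2 ≤ 0 := by linarith
    have hnn : ‖f' xstar‖ ^ 2 ≤ 0 := by
      have h2 : ‖f' xstar‖ ^ 2 = (2 * β) * (1 / (2 * β) * ‖f' xstar‖ ^ 2) := by
        field_simp
      rw [h2]
      exact mul_nonpos_of_nonneg_of_nonpos (by positivity) h1
    have h3 : ‖f' xstar‖ ^ 2 = 0 := le_antisymm hnn (sq_nonneg _)
    have h4 : ‖f' xstar‖ = 0 := pow_eq_zero_iff two_ne_zero |>.mp h3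
    exact norm_eq_zero.mp h4
  -- per-step estimate
  have hstep : ∀ k : ℕ, f (x k) - f xstar ≤
      β / 2 * ‖x k - xstar‖ ^ 2 - β / 2 * ‖x (k + 1) - xstar‖ ^ 2 := by
    intro k
    have hco := gd_cocoercive hβ hconv hdiff hlip (x k) xstar
    rw [hstar] at hco
    have h1 : ⟪f' (x k), xstar - x k⟫ = -⟪f' (x k), x k - xstar⟫ := by
      rw [← inner_neg_right]; congr 1; abel
    have h2 : ‖(0 : EuclideanSpace ℝ (Fin n)) - f' (x k)‖ = ‖f' (x k)‖ := by
      rw [zero_sub, norm_neg]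
    rw [h1, h2] at hco
    have hx1 : x (k + 1) - xstar = (x k - xstar) - (1 / β) • f' (x k) := by
      rw [hiter k]; abel
    rw [hx1]
    linarith [hco, gd_expand hβ (x k - xstar) (f' (x k))]
  -- monotonicity of the values
  have hmono : ∀ k : ℕ, f (x (k + 1)) ≤ f (x k) := by
    intro k
    have hdes := gd_descent hβ hdiff hlip (x k) (x (k + 1))
    have hsub : x (k + 1) - x k = -((1 / β) • f' (x k)) := by rw [hiter k]; abel
    rw [hsub, inner_neg_right, real_inner_smul_right, real_inner_self_eq_norm_sq,
      norm_neg, norm_smul, Real.norm_eq_abs, abs_of_pos (by positivity : (0:ℝ) < 1 / β)] at hdes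
    have h0 : -(1 / β * ‖f' (x k)‖ ^ 2) + β / 2 * (1 / β * ‖f' (x k)‖) ^ 2
        = -(1 / (2 * β)) * ‖f' (x k)‖ ^ 2 := by field_simp; ring
    have h4 : (0:ℝ) ≤ 1 / (2 * β) * ‖f' (x k)‖ ^ 2 := by positivity
    linarith [hdes, h0, h4]
  have hanti : Antitone (fun k => f (x k)) := antitone_nat_of_succ_le hmono
  -- key summed estimate by induction
  have key : ∀ k : ℕ, 1 ≤ k → (k : ℝ) * (f (x k) - f xstar) ≤
      β / 2 * ‖x 1 - xstar‖ ^ 2 - β / 2 * ‖x (k + 1) - xstar‖ ^ 2 := by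
    intro k hk
    induction k, hk using Nat.le_induction with
    | base => simpa using hstep 1
    | succ m hm ih =>
      have hmono' : f (x (m + 1)) ≤ f (x m) := hmono m
      have hst := hstep (m + 1)
      have hmn : (0:ℝ) ≤ (m : ℝ) := Nat.cast_nonneg m
      have : ((m : ℝ) + 1) * (f (x (m + 1)) - f xstar)
          = (m : ℝ) * (f (x (m + 1)) - f xstar) + (f (x (m + 1)) - f xstar) := by ring
      push_cast
      rw [this]
      have h1 : (m : ℝ) * (f (x (m + 1)) - f xstar) ≤ (m : ℝ) * (f (x m) - f xstar) :=
        mul_le_mul_of_nonneg_left (by linarith) hmn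
      linarith
  intro k hk
  have hkey := key k hk
  have hkpos : (0:ℝ) < (k : ℝ) := by exact_mod_cast hk
  have hnn : (0:ℝ) ≤ β / 2 * ‖x (k + 1) - xstar‖ ^ 2 := by positivity
  rw [le_div_iff₀ (by positivity : (0:ℝ) < 2 * (k : ℝ))]
  nlinarith [hkey, hnn]
end

section
/- Let f : ℝⁿ → ℝ be convex and L-Lipschitz, with minimizer x*. For the subgradient iterates x^{k+1} = x^k - α_k v^k with v^k ∈ ∂f(x^k) and positive step sizes α_k, the best function value satisfies min_{1≤i≤k} f(x^i) - f(x*) ≤ (‖x¹ - x*‖² + L² Σ_{i=1}^k α_i²) / (2 Σ_{i=1}^k α_i). -/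
theorem subgradient_method_bound {n : ℕ}
    (f : EuclideanSpace ℝ (Fin n) → ℝ) (L : ℝ)
    (hconv : ConvexOn ℝ Set.univ f)
    (hlip : ∀ a b, |f a - f b| ≤ L * ‖a - b‖)
    (xstar : EuclideanSpace ℝ (Fin n)) (hmin : ∀ y, f xstar ≤ f y)
    (x v : ℕ → EuclideanSpace ℝ (Fin n)) (α : ℕ → ℝ)
    (hα : ∀ k, 0 < α k)
    (hsub : ∀ k y, f (x k) + (inner ℝ (v k) (y - x k) : ℝ) ≤ f y)
    (hiter : ∀ k, x (k + 1) = x k - α k • v k) :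
    ∀ k : ℕ, 1 ≤ k → ∃ i ∈ Finset.Icc 1 k,
      f (x i) - f xstar ≤
        (‖x 1 - xstar‖ ^ 2 + L ^ 2 * ∑ i ∈ Finset.Icc 1 k, (α i) ^ 2) /
          (2 * ∑ i ∈ Finset.Icc 1 k, α i) := by
  -- subgradients are bounded by L
  have hv : ∀ i, ‖v i‖ ^ 2 ≤ L ^ 2 := by
    intro i
    have h1 := hsub i (x i + v i)
    rw [add_sub_cancel_left, real_inner_self_eq_norm_sq] at h1
    have h2 := hlip (x i + v i) (x i)
    rw [add_sub_cancel_left] at h2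
    have h3 : ‖v i‖ ^ 2 ≤ L * ‖v i‖ := by
      have := abs_le.mp h2
      linarith [this.1, this.2]
    nlinarith [norm_nonneg (v i), sq_nonneg (L - ‖v i‖)]
  -- one-step inequality
  have hstep : ∀ i, ‖x (i + 1) - xstar‖ ^ 2 ≤
      ‖x i - xstar‖ ^ 2 - 2 * α i * (f (x i) - f xstar) + α i ^ 2 * L ^ 2 := by
    intro i
    have hin : f (x i) - f xstar ≤ (inner ℝ (v i) (x i - xstar) : ℝ) := by
      have := hsub i xstar
      have hsym : (inner ℝ (v i) (xstar - x i) : ℝ) = - (inner ℝ (v i) (x i - xstar) : ℝ) := by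
        rw [← inner_neg_right, neg_sub]
      rw [hsym] at this
      linarith
    rw [hiter i, sub_right_comm]
    rw [norm_sub_sq_real]
    rw [real_inner_smul_right, norm_smul, mul_pow]
    have hcomm : (inner ℝ (x i - xstar) (v i) : ℝ) = (inner ℝ (v i) (x i - xstar) : ℝ) :=
      real_inner_comm _ _
    rw [hcomm]
    have hα' := (hα i).le
    have h4 : α i ^ 2 * ‖v i‖ ^ 2 ≤ α i ^ 2 * L ^ 2 :=
      mul_le_mul_of_nonneg_left (hv i) (sq_nonneg _)
    have h5 : α i * (f (x i) - f xstar) ≤ α i * (inner ℝ (v i) (x i - xstar) : ℝ) :=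
      mul_le_mul_of_nonneg_left hin hα'
    have : ‖α i‖ = α i := abs_of_nonneg hα'
    rw [this]
    nlinarith
  -- telescoped inequality
  have hsum : ∀ k : ℕ, 2 * ∑ i ∈ Finset.Icc 1 k, α i * (f (x i) - f xstar) ≤
      ‖x 1 - xstar‖ ^ 2 - ‖x (k + 1) - xstar‖ ^ 2 +
        L ^ 2 * ∑ i ∈ Finset.Icc 1 k, α i ^ 2 := by
    intro k
    induction k with
    | zero => simp
    | succ k ih =>
      rw [Finset.sum_Icc_succ_top (by omega : 1 ≤ k + 1),
          Finset.sum_Icc_succ_top (by omega : 1 ≤ k + 1)]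
      have := hstep (k + 1)
      nlinarith
  intro k hk
  have hne : (Finset.Icc 1 k).Nonempty := ⟨1, by simp [hk]⟩
  obtain ⟨m, hm, hmin'⟩ := Finset.exists_min_image (Finset.Icc 1 k) (fun i => f (x i)) hne
  refine ⟨m, hm, ?_⟩
  set S := ∑ i ∈ Finset.Icc 1 k, α i with hS
  have hSpos : 0 < S := Finset.sum_pos (fun i _ => hα i) hne
  have hlow : (f (x m) - f xstar) * S ≤ ∑ i ∈ Finset.Icc 1 k, α i * (f (x i) - f xstar) := by
    rw [hS, Finset.mul_sum]
    apply Finset.sum_le_sum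
    intro i hi
    rw [mul_comm]
    exact mul_le_mul_of_nonneg_left (by linarith [hmin' i hi]) (hα i).le
  have hk1 := hsum k
  have hnn : 0 ≤ ‖x (k + 1) - xstar‖ ^ 2 := sq_nonneg _
  rw [le_div_iff₀ (by positivity)]
  nlinarith
end

section
/- Let ρ : ℝ → ℝ be a symmetric, convex, coercive, differentiable penalty with ρ'(x₀) = α₀ > 0 at some x₀ > 0, and let Y be a real random variable with density proportional to exp(-ρ(x)). Then for all x₂ > x₁ ≥ x₀, P(|Y| > x₂ | |Y| > x₁) ≤ exp(-α₀(x₂ - x₁)). -/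
open MeasureTheory in
theorem log_concave_tail_bound
    (ρ : ℝ → ℝ) (hsymm : ∀ x, ρ (-x) = ρ x)
    (hconv : ConvexOn ℝ Set.univ ρ)
    (hcoer : Filter.Tendsto ρ (Filter.cocompact ℝ) Filter.atTop)
    (hdiff : Differentiable ℝ ρ)
    (x₀ α₀ : ℝ) (hx₀ : 0 < x₀) (hderiv : deriv ρ x₀ = α₀) (hα₀ : 0 < α₀)
    (c : ℝ) (μ : Measure ℝ)
    (hμ : μ = volume.withDensity (fun x => ENNReal.ofReal (c * Real.exp (-ρ x))))
    (hprob : IsProbabilityMeasure μ)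
    (x₁ x₂ : ℝ) (h1 : x₀ ≤ x₁) (h2 : x₁ < x₂) :
    μ {y | x₂ < |y|} ≤
      ENNReal.ofReal (Real.exp (-α₀ * (x₂ - x₁))) * μ {y | x₁ < |y|} := by
  subst hμ
  set δ := x₂ - x₁ with hδ
  have hδpos : 0 < δ := sub_pos.mpr h2
  set f : ℝ → ENNReal := fun x => ENNReal.ofReal (c * Real.exp (-ρ x)) with hf
  set C : ENNReal := ENNReal.ofReal (Real.exp (-α₀ * δ)) with hC
  have hρc : Continuous ρ := hdiff.continuous
  have hfm : Measurable f := by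
    apply Measurable.ennreal_ofReal
    exact (continuous_const.mul (Real.continuous_exp.comp hρc.neg)).measurable
  -- key pointwise inequality
  have key : ∀ y : ℝ, y ∈ Set.Ioi x₂ → f y ≤ C * f (y - δ) := by
    intro y hy
    have hy' : x₂ < y := hy
    have hz : x₀ ≤ y - δ := by simp only [hδ]; linarith
    have hlt : y - δ < y := by linarith
    -- α₀ ≤ slope ρ (y-δ) y
    have hmono : deriv ρ x₀ ≤ deriv ρ (y - δ) :=
      hconv.monotoneOn_deriv (fun x _ => hdiff x) (Set.mem_univ x₀)
        (Set.mem_univ (y - δ)) hz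
    have hslope : deriv ρ (y - δ) ≤ slope ρ (y - δ) y :=
      hconv.deriv_le_slope (Set.mem_univ (y - δ)) (Set.mem_univ y) hlt (hdiff (y - δ))
    have hsl : α₀ ≤ (ρ y - ρ (y - δ)) / δ := by
      have : slope ρ (y - δ) y = (ρ y - ρ (y - δ)) / δ := by
        rw [slope_def_field]
        congr 1
        ring
      rw [← this]
      calc α₀ = deriv ρ x₀ := hderiv.symm
        _ ≤ deriv ρ (y - δ) := hmono
        _ ≤ _ := hslope
    have hρineq : ρ (y - δ) + α₀ * δ ≤ ρ y := by
      have := (le_div_iff₀ hδpos).mp hsl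
      linarith
    have hexp : Real.exp (-ρ y) ≤ Real.exp (-α₀ * δ) * Real.exp (-ρ (y - δ)) := by
      rw [← Real.exp_add]
      exact Real.exp_le_exp.mpr (by linarith)
    have e1 : f y = ENNReal.ofReal c * ENNReal.ofReal (Real.exp (-ρ y)) := by
      rw [hf]
      exact ENNReal.ofReal_mul' (Real.exp_nonneg _)
    have e2 : f (y - δ) = ENNReal.ofReal c * ENNReal.ofReal (Real.exp (-ρ (y - δ))) :=
      ENNReal.ofReal_mul' (Real.exp_nonneg _)
    rw [e1, e2, hC, ← mul_assoc, mul_comm (ENNReal.ofReal (Real.exp (-α₀ * δ))),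
      mul_assoc]
    refine mul_le_mul_right ?_ _
    rw [← ENNReal.ofReal_mul (Real.exp_nonneg _)]
    exact ENNReal.ofReal_le_ofReal hexp
  -- translation invariance
  have htrans : ∫⁻ y in Set.Ioi x₂, f (y - δ) = ∫⁻ y in Set.Ioi x₁, f y := by
    rw [← lintegral_indicator measurableSet_Ioi, ← lintegral_indicator measurableSet_Ioi]
    have hind : ∀ y : ℝ, (Set.Ioi x₂).indicator (fun y => f (y - δ)) y
        = (Set.Ioi x₁).indicator f (y - δ) := by
      intro y
      by_cases hy : y ∈ Set.Ioi x₂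
      · rw [Set.indicator_of_mem hy, Set.indicator_of_mem]
        simp only [Set.mem_Ioi] at hy ⊢
        simp only [hδ]; linarith
      · rw [Set.indicator_of_notMem hy, Set.indicator_of_notMem]
        simp only [Set.mem_Ioi] at hy ⊢
        simp only [hδ]; intro h; exact hy (by linarith)
    simp_rw [hind]
    exact lintegral_sub_right_eq_self ((Set.Ioi x₁).indicator f) δ
  -- symmetry: measure of Iio (-a) equals measure of Ioi a
  have hneg : ∀ a : ℝ, ∫⁻ y in Set.Iio (-a), f y = ∫⁻ y in Set.Ioi a, f y := by
    intro a
    rw [← lintegral_indicator measurableSet_Iio, ← lintegral_indicator measurableSet_Ioi]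
    have hcomp : ∫⁻ y, (Set.Iio (-a)).indicator f (-y) = ∫⁻ y, (Set.Iio (-a)).indicator f y :=
      (Measure.measurePreserving_neg (volume : Measure ℝ)).lintegral_comp
        (hfm.indicator measurableSet_Iio)
    rw [← hcomp]
    congr 1
    funext y
    by_cases hy : y ∈ Set.Ioi a
    · rw [Set.indicator_of_mem, Set.indicator_of_mem hy]
      · show f (-y) = f y
        simp only [hf, hsymm]
      · simp only [Set.mem_Iio, Set.mem_Ioi] at hy ⊢
        linarith
    · rw [Set.indicator_of_notMem, Set.indicator_of_notMem hy]
      simp only [Set.mem_Iio, Set.mem_Ioi] at hy ⊢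
      intro h; exact hy (by linarith)
  -- main one-sided bound
  have step : ∫⁻ y in Set.Ioi x₂, f y ≤ C * ∫⁻ y in Set.Ioi x₁, f y := by
    have hg : Measurable fun y : ℝ => f (y - δ) :=
      hfm.comp (measurable_id.sub measurable_const)
    calc ∫⁻ y in Set.Ioi x₂, f y
        ≤ ∫⁻ y in Set.Ioi x₂, C * f (y - δ) := setLIntegral_mono
          (hg.const_mul C) key
      _ = C * ∫⁻ y in Set.Ioi x₂, f (y - δ) := by
          rw [lintegral_const_mul C hg]
      _ = C * ∫⁻ y in Set.Ioi x₁, f y := by rw [htrans]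
  -- decompose sets
  have hdecomp : ∀ a : ℝ, 0 ≤ a → (volume.withDensity f) {y : ℝ | a < |y|}
      = (∫⁻ y in Set.Iio (-a), f y) + ∫⁻ y in Set.Ioi a, f y := by
    intro a ha
    have hset : {y : ℝ | a < |y|} = Set.Iio (-a) ∪ Set.Ioi a := by
      ext y
      simp only [Set.mem_setOf_eq, Set.mem_union, Set.mem_Iio, Set.mem_Ioi, lt_abs]
      constructor
      · rintro (h | h)
        · right; exact h
        · left; linarith
      · rintro (h | h)
        · right; linarith
        · left; exact h
    have hdisj : Disjoint (Set.Iio (-a)) (Set.Ioi a) := by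
      rw [Set.disjoint_left]
      intro y hy hy'
      simp only [Set.mem_Iio] at hy
      simp only [Set.mem_Ioi] at hy'
      linarith
    rw [hset, withDensity_apply _ ((measurableSet_Iio).union measurableSet_Ioi),
      lintegral_union measurableSet_Ioi hdisj]
  have hx₂0 : (0 : ℝ) ≤ x₂ := by linarith
  have hx₁0 : (0 : ℝ) ≤ x₁ := by linarith
  rw [hdecomp x₂ hx₂0, hdecomp x₁ hx₁0, hneg x₂, hneg x₁, mul_add]
  exact add_le_add step step
end
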